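/- arXiv:1301.4685 — 2 statements merged into one kernel-verified Lean document; each statement's English description precedes it below -/
import Mathlib

section
/- Let A be a commutative complex algebra carrying two uniform norms ‖·‖ and |·| (each a submultiplicative norm satisfying the square property). If (A,‖·‖) is a Q-algebra (its set of quasi-invertible elements is ‖·‖-open), then |x| ≤ ‖x‖ for all x ∈ A. -/
/-- `x` is quasi-invertible: there is `y` with `x ∘ y = y ∘ x = 0`
where `x ∘ y = x + y - x*y`. -/
def IsQuasiInv {A : Type*} [NonUnitalRing A] (x : A) : Prop :=
  ∃ y, x + y - x * y = 0 ∧ y + x - y * x = 0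

/-- `S` is open in the topology induced by the norm `N`. -/
def NormOpen {A : Type*} [AddGroup A] (N : A → ℝ) (S : Set A) : Prop :=
  ∀ x ∈ S, ∃ ε > 0, ∀ y, N (y - x) < ε → y ∈ S

/-- A uniform norm: a submultiplicative norm satisfying the square property. -/
structure IsUniformNorm {A : Type*} [NonUnitalRing A] [Module ℂ A] (N : A → ℝ) : Prop where
  eq_zero_iff : ∀ x, N x = 0 ↔ x = 0
  add_le : ∀ x y, N (x + y) ≤ N x + N y
  smul_eq : ∀ (c : ℂ) (x : A), N (c • x) = ‖c‖ * N x
  mul_le : ∀ x y, N (x * y) ≤ N x * N y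
  sq_eq : ∀ x, N (x * x) = N x * N x

/-!
If `N x < 1`, the squares `x ^ 2 ^ k` have norm `N x ^ 2 ^ k → 0`, so they eventually lie in the
`N`-neighbourhood of `0` consisting of quasi-invertible elements; since `x` is quasi-invertible as
soon as `x * x` is, `x` itself is quasi-invertible. Scaling, no `z` with `N x < ‖z‖` lies in the
quasispectrum of `x`. On the other hand, embed `(A, q)` isometrically in the completion of its
`ℓ¹`-unitization. By the square property and Gelfand's formula the spectral radius of `x` there is
`q x`, and this spectrum lies in the quasispectrum of `x`. Hence `q x ≤ N x`.
-/

open Filter Topology UniformSpace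

namespace IsUniformNorm

section NonUnitalRing

variable {A : Type*} [NonUnitalRing A] [Module ℂ A] {N : A → ℝ}

theorem map_zero (hN : IsUniformNorm N) : N 0 = 0 := (hN.eq_zero_iff 0).mpr rfl

theorem map_neg (hN : IsUniformNorm N) (x : A) : N (-x) = N x := by
  rw [← neg_one_smul ℂ x, hN.smul_eq, norm_neg, norm_one, one_mul]

theorem nonneg (hN : IsUniformNorm N) (x : A) : 0 ≤ N x := by
  have h := hN.add_le x (-x)
  rw [add_neg_cancel, hN.map_zero, hN.map_neg] at h
  linarith

end NonUnitalRing

section NonUnitalCommRing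

variable {A : Type*} [NonUnitalCommRing A] [Module ℂ A] {N : A → ℝ}

abbrev toNonUnitalNormedCommRing (hN : IsUniformNorm N) : NonUnitalNormedCommRing A where
  __ := ‹NonUnitalCommRing A›
  __ := AddGroupNorm.toNormedAddCommGroup
    { toFun := N
      map_zero' := hN.map_zero
      add_le' := hN.add_le
      neg' := hN.map_neg
      eq_zero_of_map_eq_zero' := fun x => (hN.eq_zero_iff x).mp }
  norm_mul_le := hN.mul_le

abbrev toNormedSpace (hN : IsUniformNorm N) :
    letI := hN.toNonUnitalNormedCommRing
    NormedSpace ℂ A :=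
  letI := hN.toNonUnitalNormedCommRing
  ⟨fun c x => (hN.smul_eq c x).le⟩

end NonUnitalCommRing

end IsUniformNorm

section QuasiInvertible

variable {A : Type*}

theorem isQuasiInv_iff_isQuasiregular_neg [NonUnitalRing A] {x : A} :
    IsQuasiInv x ↔ IsQuasiregular (-x) := by
  rw [isQuasiregular_iff, IsQuasiInv]
  constructor <;> rintro ⟨y, h₁, h₂⟩ <;>
    exact ⟨-y, by rw [← neg_eq_zero, ← h₁]; noncomm_ring, by rw [← neg_eq_zero, ← h₂]; noncomm_ring⟩

theorem IsQuasiInv.zero [NonUnitalRing A] : IsQuasiInv (0 : A) := ⟨0, by simp, by simp⟩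

theorem IsQuasiInv.of_mul_self [NonUnitalCommRing A] {x : A} (h : IsQuasiInv (x * x)) :
    IsQuasiInv x := by
  obtain ⟨y, hy, -⟩ := h
  -- `1 - (y + x * y - x) = (1 + x) * (1 - y)` inverts `1 - x`
  have h : x + (y + x * y - x) - x * (y + x * y - x) = 0 := by rw [← hy]; noncomm_ring
  exact ⟨_, h, by rwa [add_comm _ x, mul_comm _ x]⟩

theorem isQuasiInv_of_uniformNorm_lt_one [NonUnitalCommRing A] [Module ℂ A] {N : A → ℝ}
    (hN : IsUniformNorm N) (hQ : NormOpen N {x | IsQuasiInv x}) {x : A} (hx : N x < 1) :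
    IsQuasiInv x := by
  obtain ⟨ε, hε, hball⟩ := hQ 0 IsQuasiInv.zero
  have hsq : ∀ k : ℕ, ∀ y : A, N y ^ 2 ^ k < ε → IsQuasiInv y := by
    intro k
    induction k with
    | zero => exact fun y hy => hball y (by simpa using hy)
    | succ k ih =>
      refine fun y hy => (ih (y * y) ?_).of_mul_self
      rwa [hN.sq_eq, ← sq, ← pow_mul, ← pow_succ']
  have hpow : Tendsto (fun k : ℕ => N x ^ 2 ^ k) atTop (𝓝 0) :=
    (tendsto_pow_atTop_nhds_zero_of_lt_one (hN.nonneg x) hx).comp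
      (tendsto_pow_atTop_atTop_of_one_lt one_lt_two)
  obtain ⟨k, hk⟩ := (hpow.eventually (gt_mem_nhds hε)).exists
  exact hsq k x hk

theorem notMem_quasispectrum_of_uniformNorm_lt [NonUnitalCommRing A] [Module ℂ A] {N : A → ℝ}
    (hN : IsUniformNorm N) (hQ : NormOpen N {x | IsQuasiInv x}) {x : A} {z : ℂ}
    (hz : N x < ‖z‖) : z ∉ quasispectrum ℂ x := by
  have hz₀ : z ≠ 0 := by
    rintro rfl
    exact (hN.nonneg x).not_gt (by simpa using hz)
  have hqi : IsQuasiInv (z⁻¹ • x) := by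
    refine isQuasiInv_of_uniformNorm_lt_one hN hQ ?_
    rw [hN.smul_eq, norm_inv, inv_mul_lt_one₀ (norm_pos_iff.mpr hz₀)]
    exact hz
  intro hmem
  apply hmem (isUnit_iff_ne_zero.mpr hz₀)
  rwa [Units.smul_def, Units.val_inv_eq_inv_val, IsUnit.unit_spec,
    ← isQuasiInv_iff_isQuasiregular_neg]

end QuasiInvertible

theorem spectralRadius_eq_nnnorm_of_nnnorm_pow_two_pow {B : Type*} [NormedRing B]
    [NormedAlgebra ℂ B] [CompleteSpace B] {a : B} (h : ∀ n : ℕ, ‖a ^ 2 ^ n‖₊ = ‖a‖₊ ^ 2 ^ n) :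
    spectralRadius ℂ a = ‖a‖₊ := by
  refine tendsto_nhds_unique (f := fun _ : ℕ => (‖a‖₊ : ENNReal)) (l := atTop) ?_
    tendsto_const_nhds
  convert (spectrum.pow_nnnorm_pow_one_div_tendsto_nhds_spectralRadius a).comp
    (tendsto_pow_atTop_atTop_of_one_lt one_lt_two) using 1
  funext n
  rw [Function.comp_apply, h, ENNReal.coe_pow, ← ENNReal.rpow_natCast, ← ENNReal.rpow_mul]
  simp

section SquareProperty

open Unitization

variable {A : Type*} [NonUnitalNormedCommRing A] [NormedSpace ℂ A] [SMulCommClass ℂ A A]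
  [IsScalarTower ℂ A A]

-- `Completion` is only a normed algebra over commutative rings.
noncomputable local instance : NormedCommRing (WithLp 1 (Unitization ℂ A)) where
  __ := WithLp.instUnitizationNormedRing
  mul_comm x y := WithLp.ofLp_injective 1 (mul_comm (WithLp.ofLp x) (WithLp.ofLp y))

noncomputable def Unitization.toCompletionL1 :
    Unitization ℂ A →ₐ[ℂ] Completion (WithLp 1 (Unitization ℂ A)) :=
  { Completion.coeRingHom.comp (WithLp.unitizationAlgEquiv ℂ).symm.toRingHom with
    commutes' := fun _ => rfl }

theorem Unitization.norm_toCompletionL1_inr (y : A) :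
    ‖toCompletionL1 (y : Unitization ℂ A)‖ = ‖y‖ :=
  (Completion.norm_coe _).trans (WithLp.unitization_norm_inr y)

theorem Unitization.norm_toCompletionL1_inr_pow_two_pow (hsq : ∀ a : A, ‖a * a‖ = ‖a‖ * ‖a‖)
    (y : A) (n : ℕ) : ‖toCompletionL1 (y : Unitization ℂ A) ^ 2 ^ n‖ = ‖y‖ ^ 2 ^ n := by
  induction n generalizing y with
  | zero => simp [norm_toCompletionL1_inr]
  | succ n ih =>
    rw [pow_succ', pow_mul, pow_mul, sq, ← map_mul, ← inr_mul, ih, hsq, sq]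

theorem exists_mem_quasispectrum_norm_eq (hsq : ∀ a : A, ‖a * a‖ = ‖a‖ * ‖a‖) (x : A) :
    ∃ z ∈ quasispectrum ℂ x, ‖z‖ = ‖x‖ := by
  rcases eq_or_ne x 0 with rfl | hx
  · exact ⟨0, quasispectrum.zero_mem ℂ 0, by simp⟩
  set a := toCompletionL1 (x : Unitization ℂ A)
  have ha : ‖a‖ = ‖x‖ := norm_toCompletionL1_inr x
  have : Nontrivial (Completion (WithLp 1 (Unitization ℂ A))) :=
    nontrivial_of_ne a 0 (norm_ne_zero_iff.mp (ha ▸ norm_ne_zero_iff.mpr hx))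
  have hrad : spectralRadius ℂ a = ‖a‖₊ := spectralRadius_eq_nnnorm_of_nnnorm_pow_two_pow
    fun n => NNReal.eq (by simpa only [coe_nnnorm, NNReal.coe_pow, ha] using
      norm_toCompletionL1_inr_pow_two_pow hsq x n)
  obtain ⟨z, hz, hnorm⟩ :=
    spectrum.exists_nnnorm_eq_spectralRadius_of_nonempty (spectrum.nonempty a)
  refine ⟨z, ?_, ?_⟩
  · rw [quasispectrum_eq_spectrum_inr]
    exact AlgHom.spectrum_apply_subset toCompletionL1 _ hz
  · rw [hrad, ENNReal.coe_inj] at hnorm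
    rw [← ha]
    exact congrArg NNReal.toReal hnorm

end SquareProperty

/-- If `(A, N)` is a uniform normed Q-algebra and `q` is a uniform norm on `A`,
then `q x ≤ N x` for all `x`. -/
theorem uniform_norm_le_of_qAlgebra {A : Type*} [NonUnitalCommRing A] [Module ℂ A]
    [SMulCommClass ℂ A A] [IsScalarTower ℂ A A]
    (N q : A → ℝ) (hN : IsUniformNorm N) (hq : IsUniformNorm q)
    (hQ : NormOpen N {x | IsQuasiInv x}) :
    ∀ x, q x ≤ N x := by
  intro x
  let := hq.toNonUnitalNormedCommRing
  let := hq.toNormedSpace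
  obtain ⟨z, hz, hzx⟩ := exists_mem_quasispectrum_norm_eq hq.sq_eq x
  by_contra! hlt
  exact notMem_quasispectrum_of_uniformNorm_lt hN hQ (hzx ▸ hlt) hz
end

section
/- Let A be a commutative complex algebra and let p be a uniform seminorm on A (a submultiplicative seminorm with p(x²) = p(x)² for all x). Then for every x ∈ A, p(x) = sup{|f(x)| : f a multiplicative linear functional on A with |f(y)| ≤ p(y) for all y ∈ A}. -/
open UniformSpace WeakDual Filter
open scoped NNReal ENNReal

/-!
Extend `p` to the `ℓ¹`-seminorm `‖(c, a)‖ = ‖c‖ + p a` on the unitization of `A` and complete it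
to a commutative unital complex Banach algebra `B` into which `A` embeds isometrically for `p`.
The square property gives `‖a ^ 2 ^ k‖ = ‖a‖ ^ 2 ^ k` in `B`, so by Gelfand's formula the spectral
radius of `a` is `p a`. A point of the spectrum of maximal modulus is a value `φ a` of a character
`φ` of `B`; characters of a Banach algebra have norm one, so `φ` restricts to a multiplicative
functional on `A` dominated by `p` which attains `p a` at `a`.
-/

noncomputable section

theorem norm_map_pow_two_pow {F A R : Type*} [Mul A] [Monoid R] [Norm R] [FunLike F A R]
    [MulHomClass F A R] (ι : F)
    (hsq : ∀ y, ‖ι (y * y)‖ = ‖ι y‖ * ‖ι y‖) (x : A) (k : ℕ) :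
    ‖ι x ^ 2 ^ k‖ = ‖ι x‖ ^ 2 ^ k := by
  suffices ∃ y, ι y = ι x ^ 2 ^ k ∧ ‖ι y‖ = ‖ι x‖ ^ 2 ^ k by
    obtain ⟨y, hy, hy_norm⟩ := this
    rwa [← hy]
  induction k with
  | zero => exact ⟨x, by simp⟩
  | succ k ih =>
    obtain ⟨y, hy, hy_norm⟩ := ih
    refine ⟨y * y, ?_, ?_⟩
    · rw [map_mul, hy, pow_succ, pow_mul, sq]
    · rw [hsq, hy_norm, pow_succ, pow_mul, sq]

section BanachAlgebra

variable {C : Type*} [NormedCommRing C] [NormedAlgebra ℂ C] [CompleteSpace C]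

theorem spectralRadius_eq_nnnorm_of_norm_pow_two_pow {c : C}
    (hc : ∀ k : ℕ, ‖c ^ 2 ^ k‖ = ‖c‖ ^ 2 ^ k) : spectralRadius ℂ c = ‖c‖₊ := by
  have hconst : Tendsto (fun _ : ℕ => (‖c‖₊ : ℝ≥0∞)) atTop _ := tendsto_const_nhds
  refine tendsto_nhds_unique ?_ hconst
  convert (spectrum.pow_nnnorm_pow_one_div_tendsto_nhds_spectralRadius c).comp
    (tendsto_pow_atTop_atTop_of_one_lt one_lt_two) using 1
  funext k
  have hk : ‖c ^ 2 ^ k‖₊ = ‖c‖₊ ^ 2 ^ k := NNReal.eq (by simpa using hc k)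
  rw [Function.comp_apply, hk, ENNReal.coe_pow, ← ENNReal.rpow_natCast, ← ENNReal.rpow_mul]
  simp

theorem WeakDual.CharacterSpace.exists_norm_apply_eq [Nontrivial C] {c : C}
    (hc : ∀ k : ℕ, ‖c ^ 2 ^ k‖ = ‖c‖ ^ 2 ^ k) : ∃ φ : characterSpace ℂ C, ‖φ c‖ = ‖c‖ := by
  obtain ⟨z, hz, hz_norm⟩ := spectrum.exists_nnnorm_eq_spectralRadius c
  obtain ⟨φ, rfl⟩ := CharacterSpace.mem_spectrum_iff_exists.mp hz
  rw [spectralRadius_eq_nnnorm_of_norm_pow_two_pow hc, ENNReal.coe_inj] at hz_norm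
  exact ⟨φ, congrArg NNReal.toReal hz_norm⟩

end BanachAlgebra

namespace Unitization

variable {A : Type*} [NonUnitalCommRing A] [Module ℂ A] (q : Seminorm ℂ A)

def l1Seminorm : AddGroupSeminorm (Unitization ℂ A) where
  toFun u := ‖u.fst‖ + q u.snd
  map_zero' := by simp
  add_le' u v := by
    simp only [fst_add, snd_add]
    linarith [norm_add_le u.fst v.fst, map_add_le_add q u.snd v.snd]
  neg' u := by simp

theorem l1Seminorm_apply (u : Unitization ℂ A) : l1Seminorm q u = ‖u.fst‖ + q u.snd := rfl

theorem l1Seminorm_inr (y : A) : l1Seminorm q (y : Unitization ℂ A) = q y := by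
  simp [l1Seminorm_apply]

theorem l1Seminorm_one : l1Seminorm q 1 = 1 := by
  simp [l1Seminorm_apply]

theorem l1Seminorm_smul (c : ℂ) (u : Unitization ℂ A) :
    l1Seminorm q (c • u) = ‖c‖ * l1Seminorm q u := by
  simp only [l1Seminorm_apply, fst_smul, snd_smul, smul_eq_mul, norm_mul, map_smul_eq_mul]
  ring

theorem l1Seminorm_mul_le (hq : ∀ x y, q (x * y) ≤ q x * q y) (u v : Unitization ℂ A) :
    l1Seminorm q (u * v) ≤ l1Seminorm q u * l1Seminorm q v := by
  simp only [l1Seminorm_apply, fst_mul, snd_mul, norm_mul]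
  have h := (map_add_le_add q (u.fst • v.snd + v.fst • u.snd) (u.snd * v.snd)).trans
    (add_le_add_left (map_add_le_add q (u.fst • v.snd) (v.fst • u.snd)) (q (u.snd * v.snd)))
  rw [map_smul_eq_mul, map_smul_eq_mul] at h
  nlinarith [hq u.snd v.snd, norm_nonneg u.fst, norm_nonneg v.fst, apply_nonneg q u.snd,
    apply_nonneg q v.snd]

variable [SMulCommClass ℂ A A] [IsScalarTower ℂ A A]

abbrev l1SeminormedCommRing (hq : ∀ x y, q (x * y) ≤ q x * q y) :
    SeminormedCommRing (Unitization ℂ A) :=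
  { (l1Seminorm q).toSeminormedAddCommGroup, (inferInstance : CommRing (Unitization ℂ A)) with
    norm_mul_le := l1Seminorm_mul_le q hq }

abbrev l1NormedAlgebra (hq : ∀ x y, q (x * y) ≤ q x * q y) :
    let _ := l1SeminormedCommRing q hq
    NormedAlgebra ℂ (Unitization ℂ A) :=
  let _ := l1SeminormedCommRing q hq
  { (inferInstance : Algebra ℂ (Unitization ℂ A)) with
    norm_smul_le c u := (l1Seminorm_smul q c u).le }

end Unitization

variable {A : Type*} [NonUnitalCommRing A] [Module ℂ A] [SMulCommClass ℂ A A]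
  [IsScalarTower ℂ A A] in
theorem Seminorm.exists_nonUnitalAlgHom_norm_le_and_norm_eq (q : Seminorm ℂ A)
    (hmul : ∀ x y, q (x * y) ≤ q x * q y) (hsq : ∀ x, q (x * x) = q x * q x) (x : A) :
    ∃ φ : A →ₙₐ[ℂ] ℂ, (∀ y, ‖φ y‖ ≤ q y) ∧ ‖φ x‖ = q x := by
  let _ := Unitization.l1SeminormedCommRing q hmul
  let _ := Unitization.l1NormedAlgebra q hmul
  let coe : Unitization ℂ A →ₐ[ℂ] Completion (Unitization ℂ A) :=
    AlgHom.mk' Completion.coeRingHom fun (c : ℂ) u => Completion.coe_smul c u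
  let ι : A →ₙₐ[ℂ] Completion (Unitization ℂ A) :=
    coe.toNonUnitalAlgHom.comp (Unitization.inrNonUnitalAlgHom ℂ A)
  have norm_ι (y : A) : ‖ι y‖ = q y := by
    change ‖((y : Unitization ℂ A) : Completion (Unitization ℂ A))‖ = q y
    exact (Completion.norm_coe _).trans (Unitization.l1Seminorm_inr q y)
  have : NormOneClass (Completion (Unitization ℂ A)) := ⟨by
    rw [← Completion.coe_one, Completion.norm_coe]
    exact Unitization.l1Seminorm_one q⟩
  have := NormOneClass.nontrivial (G := Completion (Unitization ℂ A))
  obtain ⟨φ, hφ⟩ := CharacterSpace.exists_norm_apply_eq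
    (norm_map_pow_two_pow ι (fun y => by rw [norm_ι, norm_ι, hsq]) x)
  refine ⟨(φ : Completion (Unitization ℂ A) →ₙₐ[ℂ] ℂ).comp ι, fun y => ?_, ?_⟩
  · exact (AlgHom.norm_apply_le_self φ (ι y)).trans_eq (norm_ι y)
  · exact hφ.trans (norm_ι x)

end

/-- Let `A` be a commutative complex algebra and `p` a uniform seminorm on `A`
(a submultiplicative seminorm with the square property). Then for every `x ∈ A`,
`p x = sup {‖f x‖ : f a multiplicative linear functional on A with ‖f y‖ ≤ p y for all y}`. -/
theorem uniform_seminorm_eq_sup_dominated_characters {A : Type*} [NonUnitalCommRing A]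
    [Module ℂ A] [SMulCommClass ℂ A A] [IsScalarTower ℂ A A]
    (p : A → ℝ)
    (hadd : ∀ x y, p (x + y) ≤ p x + p y)
    (hsmul : ∀ (c : ℂ) (x : A), p (c • x) = ‖c‖ * p x)
    (hmul : ∀ x y, p (x * y) ≤ p x * p y)
    (hsq : ∀ x, p (x * x) = p x * p x) :
    ∀ x : A, p x = sSup ((fun f : A → ℂ => ‖f x‖) ''
      {f : A → ℂ | (∀ y z, f (y + z) = f y + f z) ∧
        (∀ (c : ℂ) (y : A), f (c • y) = c * f y) ∧
        (∀ y z, f (y * z) = f y * f z) ∧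
        (∀ y, ‖f y‖ ≤ p y)}) := by
  intro x
  symm
  obtain ⟨φ, hφ_le, hφx⟩ :=
    (Seminorm.of p hadd hsmul).exists_nonUnitalAlgHom_norm_le_and_norm_eq hmul hsq x
  refine IsGreatest.csSup_eq ⟨⟨φ, ⟨map_add φ, map_smul φ, map_mul φ, hφ_le⟩, hφx⟩, ?_⟩
  rintro _ ⟨f, hf, rfl⟩
  exact hf.2.2.2 x
end
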